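/- arXiv:1905.02048 — 2 statements merged into one kernel-verified Lean document; each statement's English description precedes it below -/
import Mathlib

section
/- Let (R, m) be a Cohen–Macaulay local ring of Krull dimension 1, and let I be an m-primary ideal of R with μ_R(I) = 2, where μ_R(I) is the minimal number of generators of I. Then the following are equivalent: (1) I is an Ulrich ideal of R and I is decomposable as an R-module; (2) there exist a, b ∈ m such that I = (a, b), (a) = (0) :_R b, and (b) = (0) :_R a. -/
/-- A family `s : Fin n → R` is a system of parameters of the local ring `R`
if `n` equals the Krull dimension of `R` and the ideal generated by `s` is
primary for the maximal ideal (i.e. its radical is the maximal ideal). -/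
def IsSystemOfParameters (R : Type*) [CommRing R] [IsLocalRing R]
    {n : ℕ} (s : Fin n → R) : Prop :=
  (n : WithBot ℕ∞) = ringKrullDim R ∧
    (Ideal.span (Set.range s)).radical = IsLocalRing.maximalIdeal R

/-- A parameter ideal is an ideal generated by a system of parameters. -/
def Ideal.IsParameterIdeal {R : Type*} [CommRing R] [IsLocalRing R]
    (Q : Ideal R) : Prop :=
  ∃ (n : ℕ) (s : Fin n → R), IsSystemOfParameters R s ∧ Q = Ideal.span (Set.range s)

/-- An ideal `I` of a local ring `R` is an Ulrich ideal if it is primary for the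
maximal ideal and there is a parameter ideal `Q ⊆ I` with `I ≠ Q`, `I² = QI`,
and `I/I²` free over `R/I`. -/
def Ideal.IsUlrich {R : Type*} [CommRing R] [IsLocalRing R] (I : Ideal R) : Prop :=
  I.radical = IsLocalRing.maximalIdeal R ∧
    ∃ Q : Ideal R, Q.IsParameterIdeal ∧ Q ≤ I ∧ I ≠ Q ∧ I ^ 2 = Q * I ∧
      Module.Free (R ⧸ I) I.Cotangent

/-- A local ring is Cohen–Macaulay if it is Noetherian and some system of
parameters is a regular sequence. -/
def IsCohenMacaulayLocalRing (R : Type*) [CommRing R] [IsLocalRing R] : Prop :=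
  IsNoetherianRing R ∧
    ∃ (n : ℕ) (s : Fin n → R), IsSystemOfParameters R s ∧
      RingTheory.Sequence.IsRegular R (List.ofFn s)

/-- A local ring is regular if it is Noetherian and its maximal ideal is
generated by `dim R` elements. -/
def IsRegularLocalRing' (R : Type*) [CommRing R] [IsLocalRing R] : Prop :=
  IsNoetherianRing R ∧
    ∃ (n : ℕ) (s : Fin n → R), (n : WithBot ℕ∞) = ringKrullDim R ∧
      Ideal.span (Set.range s) = IsLocalRing.maximalIdeal R

/-- A module is decomposable if it is the (internal) direct sum of two nonzero
submodules. -/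
def Module.Decomposable (R M : Type*) [CommRing R] [AddCommGroup M] [Module R M] : Prop :=
  ∃ N₁ N₂ : Submodule R M, N₁ ≠ ⊥ ∧ N₂ ≠ ⊥ ∧ IsCompl N₁ N₂

/-- The minimal number of generators of an ideal. -/
noncomputable def Ideal.minGen {R : Type*} [CommRing R] (I : Ideal R) : ℕ :=
  sInf {n : ℕ | ∃ s : Fin n → R, I = Ideal.span (Set.range s)}


section Aux
variable {R : Type*} [CommRing R] [IsLocalRing R]

open IsLocalRing Ideal

lemma aux_mk_smul (I : Ideal R) (r : R) (w : I.Cotangent) :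
    (Ideal.Quotient.mk I r) • w = r • w := rfl

lemma aux_unit_of_not_mem {r : R} (h : r ∉ maximalIdeal R) : IsUnit r := by
  by_contra hr
  exact h ((IsLocalRing.mem_maximalIdeal r).mpr hr)

lemma aux_one_sub_unit {r : R} (h : r ∈ maximalIdeal R) : IsUnit (1 - r) := by
  apply aux_unit_of_not_mem
  intro h1
  have : (1 : R) ∈ maximalIdeal R := by
    have := add_mem h1 h
    simpa using this
  exact (IsLocalRing.maximalIdeal.isMaximal R).ne_top (Ideal.eq_top_of_isUnit_mem _ this isUnit_one)

lemma aux_nakayama [IsNoetherianRing R] {I N' : Ideal R}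
    (h : I ≤ N' ⊔ (maximalIdeal R) • I) : I ≤ N' := by
  set f := N'.mkQ
  set K : Submodule R (R ⧸ (N' : Submodule R R)) := Submodule.map f I with hK
  have hKfg : K.FG := (IsNoetherian.noetherian I).map f
  have hle : K ≤ (maximalIdeal R) • K := by
    rintro x ⟨y, hy, rfl⟩
    obtain ⟨n, hn, z, hz, rfl⟩ := Submodule.mem_sup.mp (h hy)
    have hn0 : f n = 0 := (Submodule.Quotient.mk_eq_zero _).mpr hn
    have : f (n + z) = f z := by rw [map_add, hn0, zero_add]
    rw [this, hK]
    rw [← Submodule.map_smul'']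
    exact Submodule.mem_map_of_mem hz
  have hbot : K = ⊥ :=
    Submodule.eq_bot_of_le_smul_of_le_jacobson_bot (maximalIdeal R) K hKfg hle
      (IsLocalRing.maximalIdeal_le_jacobson ⊥)
  intro x hx
  have : f x ∈ K := Submodule.mem_map_of_mem hx
  rw [hbot, Submodule.mem_bot] at this
  exact (Submodule.Quotient.mk_eq_zero N').mp this

end Aux

section Aux2
variable {R : Type*} [CommRing R] [IsLocalRing R]
open IsLocalRing Ideal

lemma aux_nzd_pow {x : R} (hx : ∀ z, z * x = 0 → z = 0) (k : ℕ) :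
    ∀ z, z * x ^ k = 0 → z = 0 := by
  induction k with
  | zero => intro z hz; simpa using hz
  | succ k ih =>
    intro z hz
    apply ih
    apply hx
    rw [pow_succ, ← mul_assoc] at hz
    exact hz

lemma aux_exists_nzd (hCM : IsCohenMacaulayLocalRing R) (hdim : ringKrullDim R = 1) :
    ∃ x, x ∈ maximalIdeal R ∧ ∀ z : R, z * x = 0 → z = 0 := by
  obtain ⟨hN, n, s, ⟨hn, hrad⟩, hreg⟩ := hCM
  rw [hdim] at hn
  have hn1 : n = 1 := by exact_mod_cast hn
  subst hn1
  have hofn : List.ofFn s = [s 0] := by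
    simp [List.ofFn_succ]
  rw [hofn] at hreg
  rw [RingTheory.Sequence.isRegular_cons_iff] at hreg
  have hreg0 : IsSMulRegular R (s 0) := hreg.1
  refine ⟨s 0, ?_, ?_⟩
  · rw [← hrad]
    exact Ideal.le_radical (Ideal.subset_span ⟨0, rfl⟩)
  · intro z hz
    have : s 0 • z = s 0 • 0 := by simpa [smul_eq_mul, mul_comm] using hz
    exact hreg0 this

lemma aux_nzd_of_param (hCM : IsCohenMacaulayLocalRing R) (hdim : ringKrullDim R = 1)
    {x : R} (hx : (Ideal.span {x}).radical = maximalIdeal R) :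
    ∀ z, z * x = 0 → z = 0 := by
  obtain ⟨y, hy, hynzd⟩ := aux_exists_nzd hCM hdim
  rw [← hx] at hy
  obtain ⟨k, hk⟩ := Ideal.mem_radical_iff.mp hy
  obtain ⟨c, hc⟩ := Ideal.mem_span_singleton'.mp hk
  intro z hz
  apply aux_nzd_pow hynzd k
  rw [← hc, ← mul_assoc, mul_comm z c, mul_assoc, hz, mul_zero]

lemma aux_faithful (hCM : IsCohenMacaulayLocalRing R) (hdim : ringKrullDim R = 1)
    {I : Ideal R} (hprim : I.radical = maximalIdeal R)
    {z : R} (hz : ∀ y ∈ I, z * y = 0) : z = 0 := by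
  haveI : IsNoetherianRing R := hCM.1
  obtain ⟨x, hxm, hxnzd⟩ := aux_exists_nzd hCM hdim
  have hfg : I.radical.FG := by
    rw [hprim]; exact IsNoetherian.noetherian _
  obtain ⟨k, hk⟩ := Ideal.exists_radical_pow_le_of_fg I hfg
  rw [hprim] at hk
  have hxk : x ^ k ∈ I := hk (Ideal.pow_mem_pow hxm k)
  exact aux_nzd_pow hxnzd k z (hz _ hxk)

lemma aux_colon_iff {c r : R} :
    r ∈ Submodule.colon (⊥ : Ideal R) (Ideal.span {c}) ↔ r * c = 0 := by
  constructor
  · intro h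
    have := Submodule.mem_colon.mp h c (Ideal.mem_span_singleton_self c)
    simpa using this
  · intro h
    rw [Submodule.mem_colon]
    intro p hp
    obtain ⟨d, rfl⟩ := Ideal.mem_span_singleton'.mp hp
    rw [Submodule.mem_bot, smul_eq_mul]
    rw [← mul_assoc, mul_comm r d, mul_assoc, h, mul_zero]

end Aux2

section Cot
variable {R : Type*} [CommRing R] [IsLocalRing R]
open IsLocalRing Ideal

noncomputable def auxPhi (I : Ideal R) {a b : R} (ha : a ∈ I) (hb : b ∈ I) :
    ((R ⧸ I) × (R ⧸ I)) →ₗ[R ⧸ I] I.Cotangent :=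
  (LinearMap.toSpanSingleton (R ⧸ I) I.Cotangent (I.toCotangent ⟨a, ha⟩)).coprod
    (LinearMap.toSpanSingleton (R ⧸ I) I.Cotangent (I.toCotangent ⟨b, hb⟩))

lemma auxPhi_mk (I : Ideal R) {a b : R} (ha : a ∈ I) (hb : b ∈ I) (r s : R) :
    auxPhi I ha hb (Ideal.Quotient.mk I r, Ideal.Quotient.mk I s)
      = I.toCotangent ⟨r * a + s * b,
          I.add_mem (I.mul_mem_left r ha) (I.mul_mem_left s hb)⟩ := by
  show (Ideal.Quotient.mk I r) • (I.toCotangent ⟨a, ha⟩)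
      + (Ideal.Quotient.mk I s) • (I.toCotangent ⟨b, hb⟩) = _
  rw [aux_mk_smul, aux_mk_smul, ← map_smul, ← map_smul, ← map_add]
  congr 1

lemma auxPhi_surj (I : Ideal R) {a b : R} (ha : a ∈ I) (hb : b ∈ I)
    (hI : I = Ideal.span {a, b}) :
    Function.Surjective (auxPhi I ha hb) := by
  intro w
  obtain ⟨⟨y, hy⟩, rfl⟩ := I.toCotangent_surjective w
  have hy' : y ∈ Ideal.span {a, b} := hI ▸ hy
  obtain ⟨r, s, hrs⟩ := Ideal.mem_span_pair.mp hy'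
  refine ⟨(Ideal.Quotient.mk I r, Ideal.Quotient.mk I s), ?_⟩
  rw [auxPhi_mk]
  exact congrArg _ (Subtype.ext hrs)

lemma auxPhi_inj (I : Ideal R) {a b : R} (ha : a ∈ I) (hb : b ∈ I)
    (hP : ∀ r s : R, r * a + s * b ∈ I ^ 2 → r ∈ I ∧ s ∈ I) :
    Function.Injective (auxPhi I ha hb) := by
  rw [← LinearMap.ker_eq_bot, eq_bot_iff]
  rintro ⟨c, d⟩ hp
  obtain ⟨r, rfl⟩ := Ideal.Quotient.mk_surjective c
  obtain ⟨s, rfl⟩ := Ideal.Quotient.mk_surjective d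
  rw [LinearMap.mem_ker, auxPhi_mk, Ideal.toCotangent_eq_zero] at hp
  obtain ⟨hr, hs⟩ := hP r s hp
  simp [Prod.ext_iff, Ideal.Quotient.eq_zero_iff_mem, hr, hs]

lemma auxP_of_inj (I : Ideal R) {a b : R} (ha : a ∈ I) (hb : b ∈ I)
    (hinj : Function.Injective (auxPhi I ha hb)) :
    ∀ r s : R, r * a + s * b ∈ I ^ 2 → r ∈ I ∧ s ∈ I := by
  intro r s h
  have h0 : auxPhi I ha hb (Ideal.Quotient.mk I r, Ideal.Quotient.mk I s) = 0 := by
    rw [auxPhi_mk]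
    exact (Ideal.toCotangent_eq_zero _ _).mpr h
  have h1 := hinj (a₁ := (Ideal.Quotient.mk I r, Ideal.Quotient.mk I s)) (a₂ := 0)
    (by simpa using h0)
  rw [Prod.ext_iff] at h1
  constructor
  · exact (Ideal.Quotient.eq_zero_iff_mem).mp h1.1
  · exact (Ideal.Quotient.eq_zero_iff_mem).mp h1.2

end Cot

section Free
variable {R : Type*} [CommRing R] [IsLocalRing R]
open IsLocalRing Ideal

lemma aux_not_cyclic [IsNoetherianRing R] {I : Ideal R}
    (hIm : I ≤ maximalIdeal R) (hne1 : ∀ c : R, I ≠ Ideal.span {c})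
    {v : I.Cotangent} (hv : ∀ w : I.Cotangent, w ∈ Submodule.span (R ⧸ I) {v}) : False := by
  obtain ⟨⟨c, hc⟩, rfl⟩ := I.toCotangent_surjective v
  have hsmul : I ^ 2 ≤ (maximalIdeal R) • I := by
    rw [Ideal.smul_eq_mul, pow_two]
    exact Ideal.mul_mono hIm le_rfl
  have hIle : I ≤ Ideal.span {c} ⊔ (maximalIdeal R) • I := by
    intro y hy
    obtain ⟨σ, hσ⟩ := Submodule.mem_span_singleton.mp (hv (I.toCotangent ⟨y, hy⟩))
    obtain ⟨t, rfl⟩ := Ideal.Quotient.mk_surjective σ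
    rw [aux_mk_smul, ← map_smul] at hσ
    have h2 : y - t * c ∈ I ^ 2 := by
      have h4 : ((⟨y, hy⟩ : I) : R) - ((t • (⟨c, hc⟩ : I) : I) : R) ∈ I ^ 2 := by
        apply (Ideal.toCotangent_eq (I := I)).mp
        exact hσ.symm
      simpa [smul_eq_mul] using h4
    apply Submodule.mem_sup.mpr
    exact ⟨t * c, Ideal.mem_span_singleton'.mpr ⟨t, rfl⟩, y - t * c, hsmul h2, by ring⟩
  have hle : I ≤ Ideal.span {c} := aux_nakayama hIle
  exact hne1 c (le_antisymm hle ((Ideal.span_singleton_le_iff_mem _).mpr hc))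

lemma aux_P_of_free [IsNoetherianRing R] {I : Ideal R} {a b : R}
    (ha : a ∈ I) (hb : b ∈ I) (hI : I = Ideal.span {a, b})
    (hIm : I ≤ maximalIdeal R)
    (hfree : Module.Free (R ⧸ I) I.Cotangent)
    (hne1 : ∀ c : R, I ≠ Ideal.span {c}) :
    ∀ r s : R, r * a + s * b ∈ I ^ 2 → r ∈ I ∧ s ∈ I := by
  have hItop : I ≠ ⊤ := by
    intro h
    have h1 : (1 : R) ∈ maximalIdeal R := hIm (h ▸ Submodule.mem_top)
    exact (IsLocalRing.maximalIdeal.isMaximal R).ne_top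
      (Ideal.eq_top_of_isUnit_mem _ h1 isUnit_one)
  haveI : Nontrivial (R ⧸ I) := Ideal.Quotient.nontrivial_iff.mpr hItop
  set φ := auxPhi I ha hb with hφ
  have hsurj : Function.Surjective φ := auxPhi_surj I ha hb hI
  haveI : Module.Finite (R ⧸ I) I.Cotangent := Module.Finite.of_surjective φ hsurj
  have hrank2 : Module.finrank (R ⧸ I) I.Cotangent ≤ 2 := by
    have h1 : Module.rank (R ⧸ I) I.Cotangent
        ≤ Module.rank (R ⧸ I) ((R ⧸ I) × (R ⧸ I)) :=
      LinearMap.rank_le_of_surjective φ hsurj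
    rw [rank_prod', Module.rank_self] at h1
    apply Module.finrank_le_of_rank_le
    refine h1.trans (le_of_eq ?_)
    norm_num
  have hge2 : 2 ≤ Module.finrank (R ⧸ I) I.Cotangent := by
    by_contra hlt
    push_neg at hlt
    interval_cases h : Module.finrank (R ⧸ I) I.Cotangent
    · have bC := Module.finBasisOfFinrankEq (R ⧸ I) I.Cotangent h
      apply aux_not_cyclic hIm hne1 (v := 0)
      intro w
      have hw : w ∈ Submodule.span (R ⧸ I) (Set.range bC) := by
        rw [bC.span_eq]; trivial
      rw [Set.range_eq_empty, Submodule.span_empty] at hw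
      rw [Submodule.mem_bot] at hw
      rw [hw]
      exact Submodule.zero_mem _
    · have bC := Module.finBasisOfFinrankEq (R ⧸ I) I.Cotangent h
      apply aux_not_cyclic hIm hne1 (v := bC 0)
      intro w
      have hw : w ∈ Submodule.span (R ⧸ I) (Set.range bC) := by
        rw [bC.span_eq]; trivial
      rwa [Set.range_unique, show (default : Fin 1) = 0 from rfl] at hw
  have hn2 : Module.finrank (R ⧸ I) I.Cotangent = 2 := le_antisymm hrank2 hge2
  have bC := Module.finBasisOfFinrankEq (R ⧸ I) I.Cotangent hn2
  let e : I.Cotangent ≃ₗ[R ⧸ I] ((R ⧸ I) × (R ⧸ I)) :=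
    bC.equivFun.trans (LinearEquiv.finTwoArrow (R ⧸ I) (R ⧸ I))
  have hsurj' : Function.Surjective (e.toLinearMap.comp φ) := by
    rw [LinearMap.coe_comp]
    exact e.surjective.comp hsurj
  have hinj' := OrzechProperty.injective_of_surjective_endomorphism _ hsurj'
  rw [LinearMap.coe_comp] at hinj'
  exact auxP_of_inj I ha hb (Function.Injective.of_comp hinj')

end Free

section Main
variable {R : Type*} [CommRing R] [IsLocalRing R]
open IsLocalRing Ideal

lemma aux_ne_singleton {I : Ideal R} (hmu : I.minGen = 2) :
    ∀ c : R, I ≠ Ideal.span {c} := by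
  intro c hc
  have h1 : (1 : ℕ) ∈ {n : ℕ | ∃ s : Fin n → R, I = Ideal.span (Set.range s)} :=
    ⟨fun _ => c, by rw [hc, Set.range_const]⟩
  have h2 : I.minGen ≤ 1 := Nat.sInf_le h1
  omega

lemma aux_backward (hCM : IsCohenMacaulayLocalRing R) (hdim : ringKrullDim R = 1)
    {I : Ideal R} (hprim : I.radical = maximalIdeal R) (hmu : I.minGen = 2)
    {a b : R} (ham : a ∈ maximalIdeal R) (hbm : b ∈ maximalIdeal R)
    (hI : I = Ideal.span {a, b})
    (hcol1 : Ideal.span {a} = Submodule.colon (⊥ : Ideal R) (Ideal.span {b}))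
    (hcol2 : Ideal.span {b} = Submodule.colon (⊥ : Ideal R) (Ideal.span {a})) :
    I.IsUlrich ∧ Module.Decomposable R I := by
  haveI : IsNoetherianRing R := hCM.1
  have hne1 := aux_ne_singleton hmu
  have ha : a ∈ I := hI ▸ Ideal.subset_span (by simp)
  have hb : b ∈ I := hI ▸ Ideal.subset_span (by simp)
  have hanna : ∀ r : R, r ∈ Ideal.span {b} ↔ r * a = 0 := fun r => by
    rw [hcol2]; exact aux_colon_iff
  have hannb : ∀ r : R, r ∈ Ideal.span {a} ↔ r * b = 0 := fun r => by
    rw [hcol1]; exact aux_colon_iff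
  have hab : a * b = 0 := (hannb a).mp (Ideal.mem_span_singleton_self a)
  have hint : Ideal.span {a} ⊓ Ideal.span {b} = ⊥ := by
    rw [eq_bot_iff]
    intro z hz
    obtain ⟨hz1, hz2⟩ := Submodule.mem_inf.mp hz
    rw [Submodule.mem_bot]
    apply aux_faithful hCM hdim hprim
    intro y hy
    rw [hI] at hy
    obtain ⟨r, s, rfl⟩ := Ideal.mem_span_pair.mp hy
    have hza : z * a = 0 := (hanna z).mp hz2
    have hzb : z * b = 0 := (hannb z).mp hz1
    linear_combination r * hza + s * hzb
  have ha0 : a ≠ 0 := by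
    intro h
    have h1 : (1 : R) ∈ Ideal.span {b} := (hanna 1).mpr (by rw [h, mul_zero])
    obtain ⟨d, hd⟩ := Ideal.mem_span_singleton'.mp h1
    exact ((IsLocalRing.mem_maximalIdeal b).mp hbm) (IsUnit.of_mul_eq_one (a := b) d (by linear_combination hd))
  have hb0 : b ≠ 0 := by
    intro h
    have h1 : (1 : R) ∈ Ideal.span {a} := (hannb 1).mpr (by rw [h, mul_zero])
    obtain ⟨d, hd⟩ := Ideal.mem_span_singleton'.mp h1
    exact ((IsLocalRing.mem_maximalIdeal a).mp ham) (IsUnit.of_mul_eq_one (a := a) d (by linear_combination hd))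
  have hxm : a + b ∈ maximalIdeal R := add_mem ham hbm
  have hxI : a + b ∈ I := hI ▸ Ideal.mem_span_pair.mpr ⟨1, 1, by ring⟩
  have hQle : Ideal.span {a + b} ≤ I := (Ideal.span_singleton_le_iff_mem _).mpr hxI
  have hsaI : Ideal.span {a} ≤ I := (Ideal.span_singleton_le_iff_mem _).mpr ha
  have hsbI : Ideal.span {b} ≤ I := (Ideal.span_singleton_le_iff_mem _).mpr hb
  have hI2 : I ^ 2 = Ideal.span {a + b} * I := by
    apply le_antisymm
    · rw [pow_two]
      rw [Ideal.mul_le]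
      intro r hr y hy2
      rw [hI] at hr hy2
      obtain ⟨c1, d1, rfl⟩ := Ideal.mem_span_pair.mp hr
      obtain ⟨c2, d2, rfl⟩ := Ideal.mem_span_pair.mp hy2
      have key : (c1*a + d1*b) * (c2*a + d2*b) = (a+b) * ((c1*c2)*a + (d1*d2)*b) := by
        linear_combination (c1*d2 + d1*c2 - c1*c2 - d1*d2) * hab
      rw [key]
      exact Ideal.mul_mem_mul (Ideal.mem_span_singleton_self _)
        (hI ▸ Ideal.mem_span_pair.mpr ⟨c1*c2, d1*d2, rfl⟩)
    · rw [pow_two]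
      exact Ideal.mul_mono hQle le_rfl
  have hQrad : (Ideal.span {a + b}).radical = maximalIdeal R := by
    apply le_antisymm
    · calc (Ideal.span {a + b}).radical
          ≤ (maximalIdeal R).radical :=
            Ideal.radical_mono ((Ideal.span_singleton_le_iff_mem _).mpr hxm)
        _ = maximalIdeal R := (IsLocalRing.maximalIdeal.isMaximal R).isPrime.radical
    · calc maximalIdeal R = I.radical := hprim.symm
        _ = (I ^ 2).radical := (Ideal.radical_pow (I := I) (n := 2) two_ne_zero).symm
        _ ≤ (Ideal.span {a + b}).radical := Ideal.radical_mono (by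
            rw [hI2]; exact Ideal.mul_le_left)
  have hP : ∀ r s : R, r * a + s * b ∈ I ^ 2 → r ∈ I ∧ s ∈ I := by
    intro r s h
    rw [hI2] at h
    obtain ⟨z, hzI, hz⟩ := Ideal.mem_span_singleton_mul.mp h
    rw [hI] at hzI
    obtain ⟨c, d, rfl⟩ := Ideal.mem_span_pair.mp hzI
    have key : (r - c*a) * a = (d*b - s) * b := by
      linear_combination (-1 : R) * hz + (c + d) * hab
    have hw0 : (r - c*a) * a = 0 := by
      have hwmem : (r - c*a) * a ∈ Ideal.span {a} ⊓ Ideal.span {b} := by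
        refine Submodule.mem_inf.mpr ⟨Ideal.mem_span_singleton'.mpr ⟨r - c*a, rfl⟩, ?_⟩
        rw [key]
        exact Ideal.mem_span_singleton'.mpr ⟨d*b - s, rfl⟩
      rw [hint] at hwmem
      exact (Submodule.mem_bot R).mp hwmem
    constructor
    · have h5 : r - c*a ∈ I := hsbI ((hanna _).mpr hw0)
      have h6 : r = (r - c*a) + c*a := by ring
      rw [h6]
      exact I.add_mem h5 (I.mul_mem_left c ha)
    · have hw0' : (d*b - s) * b = 0 := by rw [← key]; exact hw0
      have h5 : d*b - s ∈ I := hsaI ((hannb _).mpr hw0')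
      have h6 : s = d*b - (d*b - s) := by ring
      rw [h6]
      exact I.sub_mem (I.mul_mem_left d hb) h5
  have hfree : Module.Free (R ⧸ I) I.Cotangent :=
    Module.Free.of_equiv (LinearEquiv.ofBijective (auxPhi I ha hb)
      ⟨auxPhi_inj I ha hb hP, auxPhi_surj I ha hb hI⟩)
  constructor
  · refine ⟨hprim, Ideal.span {a + b}, ⟨1, fun _ => a + b, ⟨?_, ?_⟩, ?_⟩, hQle, hne1 _, hI2, hfree⟩
    · rw [hdim]; simp
    · rw [Set.range_const]; exact hQrad
    · rw [Set.range_const]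
  · refine ⟨Submodule.comap I.subtype (Ideal.span {a}),
      Submodule.comap I.subtype (Ideal.span {b}), ?_, ?_, ?_⟩
    · intro h
      have hmem : (⟨a, ha⟩ : I) ∈ Submodule.comap I.subtype (Ideal.span {a}) :=
        Ideal.mem_span_singleton_self a
      rw [h, Submodule.mem_bot] at hmem
      exact ha0 (by simpa [Submodule.mk_eq_zero] using hmem)
    · intro h
      have hmem : (⟨b, hb⟩ : I) ∈ Submodule.comap I.subtype (Ideal.span {b}) :=
        Ideal.mem_span_singleton_self b
      rw [h, Submodule.mem_bot] at hmem
      exact hb0 (by simpa [Submodule.mk_eq_zero] using hmem)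
    · constructor
      · rw [disjoint_iff, eq_bot_iff]
        intro x hx
        obtain ⟨h1, h2⟩ := Submodule.mem_inf.mp hx
        have : (x : R) ∈ Ideal.span {a} ⊓ Ideal.span {b} := Submodule.mem_inf.mpr ⟨h1, h2⟩
        rw [hint, Submodule.mem_bot] at this
        rw [Submodule.mem_bot]
        exact Subtype.ext this
      · rw [codisjoint_iff, eq_top_iff]
        intro x _
        have hx2 : (x : R) ∈ Ideal.span {a} ⊔ Ideal.span {b} := by
          have h : (x : R) ∈ Ideal.span {a, b} := by rw [← hI]; exact x.2
          rwa [Ideal.span_insert] at h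
        obtain ⟨y, hy, z, hz, hyz⟩ := Submodule.mem_sup.mp hx2
        refine Submodule.mem_sup.mpr ⟨⟨y, hsaI hy⟩, hy, ⟨z, hsbI hz⟩, hz, ?_⟩
        exact Subtype.ext hyz

end Main


section Forward
variable {R : Type*} [CommRing R] [IsLocalRing R]
open IsLocalRing Ideal

lemma aux_eq_inv_mul {α y z : R} (hα : IsUnit α) (h : α * y = z) :
    y = ↑hα.unit⁻¹ * z := by
  rw [← h, ← mul_assoc, hα.val_inv_mul, one_mul]

lemma aux_final {I : Ideal R} (hIm : I ≤ maximalIdeal R)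
    {a b x α β : R} (ha : a ∈ I) (hb : b ∈ I) (hI : I = Ideal.span {a, b})
    (hint : Ideal.span {a} ⊓ Ideal.span {b} = ⊥)
    (hP : ∀ r s : R, r * a + s * b ∈ I ^ 2 → r ∈ I ∧ s ∈ I)
    (hx : α * a + β * b = x) (hnzd : ∀ z : R, z * x = 0 → z = 0)
    (hI2 : I ^ 2 = Ideal.span {x} * I)
    (hα : IsUnit α) (hb0 : b ≠ 0) :
    ∃ a' b' : R, a' ∈ maximalIdeal R ∧ b' ∈ maximalIdeal R ∧ I = Ideal.span {a', b'} ∧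
      Ideal.span {a'} = Submodule.colon (⊥ : Ideal R) (Ideal.span {b'}) ∧
      Ideal.span {b'} = Submodule.colon (⊥ : Ideal R) (Ideal.span {a'}) := by
  have hab : a * b = 0 := by
    have hmem : a * b ∈ Ideal.span {a} ⊓ Ideal.span {b} := Submodule.mem_inf.mpr
      ⟨Ideal.mem_span_singleton'.mpr ⟨b, by ring⟩, Ideal.mem_span_singleton'.mpr ⟨a, by ring⟩⟩
    rw [hint] at hmem
    exact (Submodule.mem_bot R).mp hmem
  have hβ : IsUnit β := by
    by_contra hβ
    have hβm : β ∈ maximalIdeal R := (IsLocalRing.mem_maximalIdeal β).mpr hβ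
    have hbb : b * b ∈ I ^ 2 := by rw [pow_two]; exact Ideal.mul_mem_mul hb hb
    rw [hI2] at hbb
    obtain ⟨z, hzI, hz⟩ := Ideal.mem_span_singleton_mul.mp hbb
    rw [hI] at hzI
    obtain ⟨c, d, rfl⟩ := Ideal.mem_span_pair.mp hzI
    have hz' : (α*a + β*b) * (c*a + d*b) = b*b := by rw [hx]; exact hz
    have key : (1 - β*d) * (b*b) = (α*c) * (a*a) := by
      linear_combination (-1 : R) * hz' + (α*d + β*c) * hab
    have hw0 : (1 - β*d) * (b*b) = 0 := by
      have hmem : (1 - β*d) * (b*b) ∈ Ideal.span {a} ⊓ Ideal.span {b} := by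
        refine Submodule.mem_inf.mpr ⟨?_, ?_⟩
        · rw [key]; exact Ideal.mem_span_singleton'.mpr ⟨α*c*a, by ring⟩
        · exact Ideal.mem_span_singleton'.mpr ⟨(1 - β*d)*b, by ring⟩
      rw [hint] at hmem
      exact (Submodule.mem_bot R).mp hmem
    have hu : IsUnit (1 - β*d) := aux_one_sub_unit ((maximalIdeal R).mul_mem_right d hβm)
    have hbb0 : b * b = 0 := by
      have h1 := aux_eq_inv_mul hu hw0
      rw [h1, mul_zero]
    have hbx : b * x = 0 := by
      rw [← hx]; linear_combination α * hab + β * hbb0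
    exact hb0 (hnzd b hbx)
  have hcancelα : ∀ r : R, r * α ∈ I → r ∈ I := by
    intro r hrI
    have h1 : r = r * α * ↑hα.unit⁻¹ := by rw [mul_assoc, hα.mul_val_inv, mul_one]
    rw [h1]
    exact I.mul_mem_right _ hrI
  have hcancelβ : ∀ r : R, r * β ∈ I → r ∈ I := by
    intro r hrI
    have h1 : r = r * β * ↑hβ.unit⁻¹ := by rw [mul_assoc, hβ.mul_val_inv, mul_one]
    rw [h1]
    exact I.mul_mem_right _ hrI
  -- normalized generators
  have hspa : Ideal.span {α * a} = Ideal.span {a} := Ideal.span_singleton_mul_left_unit hα a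
  have hspb : Ideal.span {β * b} = Ideal.span {b} := Ideal.span_singleton_mul_left_unit hβ b
  have ha' : α * a ∈ I := I.mul_mem_left α ha
  have hb' : β * b ∈ I := I.mul_mem_left β hb
  have hI' : I = Ideal.span {α * a, β * b} := by
    rw [hI, Ideal.span_insert, Ideal.span_insert, hspa, hspb]
  have hint' : Ideal.span {α * a} ⊓ Ideal.span {β * b} = ⊥ := by
    rw [hspa, hspb]; exact hint
  have hab' : (α * a) * (β * b) = 0 := by
    rw [show (α * a) * (β * b) = (α * β) * (a * b) from by ring, hab, mul_zero]
  have hx' : (α * a) + (β * b) = x := hx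
  -- annihilator computations
  have hannA : ∀ r : R, r * (α * a) = 0 → r ∈ Ideal.span {β * b} := by
    intro r hr
    have hrI : r ∈ I := by
      apply hcancelα
      refine (hP (r * α) 0 ?_).1
      rw [show (r * α) * a + 0 * b = r * (α * a) from by ring, hr]
      exact zero_mem _
    rw [hI'] at hrI
    obtain ⟨c, d, hcd⟩ := Ideal.mem_span_pair.mp hrI
    have h0 : c * ((α*a)*(α*a)) = 0 := by
      linear_combination (α*a) * hcd + hr - d * hab'
    have h1 : (c * (α*a)) * x = 0 := by
      rw [← hx']
      linear_combination h0 + c * hab'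
    have h2 : c * (α*a) = 0 := hnzd _ h1
    have h3 : r = d * (β*b) := by linear_combination (-1 : R) * hcd + h2
    rw [h3]
    exact Ideal.mem_span_singleton'.mpr ⟨d, rfl⟩
  have hannB : ∀ r : R, r * (β * b) = 0 → r ∈ Ideal.span {α * a} := by
    intro r hr
    have hrI : r ∈ I := by
      apply hcancelβ
      refine (hP 0 (r * β) ?_).2
      rw [show 0 * a + (r * β) * b = r * (β * b) from by ring, hr]
      exact zero_mem _
    rw [hI'] at hrI
    obtain ⟨c, d, hcd⟩ := Ideal.mem_span_pair.mp hrI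
    have h0 : d * ((β*b)*(β*b)) = 0 := by
      linear_combination (β*b) * hcd + hr - c * hab'
    have h1 : (d * (β*b)) * x = 0 := by
      rw [← hx']
      linear_combination h0 + d * hab'
    have h2 : d * (β*b) = 0 := hnzd _ h1
    have h3 : r = c * (α*a) := by linear_combination (-1 : R) * hcd + h2
    rw [h3]
    exact Ideal.mem_span_singleton'.mpr ⟨c, rfl⟩
  refine ⟨α * a, β * b, hIm ha', hIm hb', hI', ?_, ?_⟩
  · ext r
    rw [aux_colon_iff]
    constructor
    · intro hr
      obtain ⟨d, rfl⟩ := Ideal.mem_span_singleton'.mp hr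
      linear_combination d * β * α * hab
    · exact hannB r
  · ext r
    rw [aux_colon_iff]
    constructor
    · intro hr
      obtain ⟨d, rfl⟩ := Ideal.mem_span_singleton'.mp hr
      linear_combination d * α * β * hab
    · exact hannA r

end Forward

section Exchange
variable {R : Type*} [CommRing R] [IsLocalRing R]
open IsLocalRing Ideal

lemma aux_exchange {I A B : Ideal R} (hABsup : A ⊔ B = I) (hABinf : A ⊓ B = ⊥)
    (hA : A ≠ ⊥) (hB : B ≠ ⊥)
    (hgen : ∃ p : Fin 2 → R, I = Ideal.span (Set.range p))
    (hne1 : ∀ c : R, I ≠ Ideal.span {c}) :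
    ∃ a b : R, a ∈ A ∧ b ∈ B ∧ I = Ideal.span {a, b} := by
  obtain ⟨p, hp⟩ := hgen
  have hrange : Set.range p = {p 0, p 1} := by
    ext t
    simp [Set.mem_range, Fin.exists_fin_two, eq_comm]
  rw [hrange] at hp
  have hp0 : p 0 ∈ I := hp ▸ Ideal.subset_span (by simp)
  have hp1 : p 1 ∈ I := hp ▸ Ideal.subset_span (by simp)
  have hAI : A ≤ I := hABsup ▸ le_sup_left
  have hBI : B ≤ I := hABsup ▸ le_sup_right
  obtain ⟨a₀, ha₀, b₀, hb₀, hab₀⟩ := Submodule.mem_sup.mp (show p 0 ∈ A ⊔ B from hABsup ▸ hp0)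
  obtain ⟨a₁, ha₁, b₁, hb₁, hab₁⟩ := Submodule.mem_sup.mp (show p 1 ∈ A ⊔ B from hABsup ▸ hp1)
  obtain ⟨e11, e12, he1⟩ := Ideal.mem_span_pair.mp (show a₀ ∈ Ideal.span {p 0, p 1} from hp ▸ hAI ha₀)
  obtain ⟨e21, e22, he2⟩ := Ideal.mem_span_pair.mp (show a₁ ∈ Ideal.span {p 0, p 1} from hp ▸ hAI ha₁)
  obtain ⟨e31, e32, he3⟩ := Ideal.mem_span_pair.mp (show b₀ ∈ Ideal.span {p 0, p 1} from hp ▸ hBI hb₀)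
  obtain ⟨e41, e42, he4⟩ := Ideal.mem_span_pair.mp (show b₁ ∈ Ideal.span {p 0, p 1} from hp ▸ hBI hb₁)
  have hrel0 : (e11 + e31) * p 0 + (e12 + e32) * p 1 = p 0 := by
    linear_combination he1 + he3 + hab₀
  have hrel1 : (e21 + e41) * p 0 + (e22 + e42) * p 1 = p 1 := by
    linear_combination he2 + he4 + hab₁
  -- helpers : I is not generated by p 0 or p 1 alone
  have hIp0 : ∀ c : R, p 1 = c * p 0 → False := by
    intro c hc
    apply hne1 (p 0)
    apply le_antisymm
    · rw [hp]
      apply Ideal.span_le.mpr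
      rintro t ht
      simp only [Set.mem_insert_iff, Set.mem_singleton_iff] at ht
      rcases ht with rfl | rfl
      · exact Ideal.mem_span_singleton_self _
      · exact Ideal.mem_span_singleton'.mpr ⟨c, hc.symm⟩
    · exact (Ideal.span_singleton_le_iff_mem _).mpr hp0
  have hIp1 : ∀ c : R, p 0 = c * p 1 → False := by
    intro c hc
    apply hne1 (p 1)
    apply le_antisymm
    · rw [hp]
      apply Ideal.span_le.mpr
      rintro t ht
      simp only [Set.mem_insert_iff, Set.mem_singleton_iff] at ht
      rcases ht with rfl | rfl
      · exact Ideal.mem_span_singleton'.mpr ⟨c, hc.symm⟩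
      · exact Ideal.mem_span_singleton_self _
    · exact (Ideal.span_singleton_le_iff_mem _).mpr hp1
  -- the matrix entries are congruent to the identity mod m
  have hf12 : e12 + e32 ∈ maximalIdeal R := by
    by_contra h
    have hu := aux_unit_of_not_mem h
    have h1 : (e12 + e32) * p 1 = (1 - (e11 + e31)) * p 0 := by linear_combination hrel0
    exact hIp0 _ (by rw [aux_eq_inv_mul hu h1, ← mul_assoc])
  have hf21 : e21 + e41 ∈ maximalIdeal R := by
    by_contra h
    have hu := aux_unit_of_not_mem h
    have h1 : (e21 + e41) * p 0 = (1 - (e22 + e42)) * p 1 := by linear_combination hrel1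
    exact hIp1 _ (by rw [aux_eq_inv_mul hu h1, ← mul_assoc])
  have hf11 : 1 - (e11 + e31) ∈ maximalIdeal R := by
    by_contra h
    have hu := aux_unit_of_not_mem h
    have h1 : (1 - (e11 + e31)) * p 0 = (e12 + e32) * p 1 := by linear_combination (-1 : R) * hrel0
    exact hIp1 _ (by rw [aux_eq_inv_mul hu h1, ← mul_assoc])
  have hf22 : 1 - (e22 + e42) ∈ maximalIdeal R := by
    by_contra h
    have hu := aux_unit_of_not_mem h
    have h1 : (1 - (e22 + e42)) * p 1 = (e21 + e41) * p 0 := by linear_combination (-1 : R) * hrel1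
    exact hIp0 _ (by rw [aux_eq_inv_mul hu h1, ← mul_assoc])
  -- the determinant is a unit
  have hdet : IsUnit ((e11 + e31) * (e22 + e42) - (e12 + e32) * (e21 + e41)) := by
    apply aux_unit_of_not_mem
    intro hd
    have h1 : (1 : R) ∈ maximalIdeal R := by
      have heq : (1 : R) = (1 - (e11 + e31)) + (e11 + e31) * (1 - (e22 + e42))
          + (e12 + e32) * (e21 + e41)
          + ((e11 + e31) * (e22 + e42) - (e12 + e32) * (e21 + e41)) := by ring
      rw [heq]
      exact add_mem (add_mem (add_mem hf11 ((maximalIdeal R).mul_mem_left _ hf22))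
        ((maximalIdeal R).mul_mem_right _ hf12)) hd
    exact (IsLocalRing.maximalIdeal.isMaximal R).ne_top
      (Ideal.eq_top_of_isUnit_mem _ h1 isUnit_one)
  -- one of the four 2x2 minors is a unit
  have hone : IsUnit (e11*e22 - e12*e21) ∨ IsUnit (e11*e42 - e12*e41)
      ∨ IsUnit (e31*e22 - e32*e21) ∨ IsUnit (e31*e42 - e32*e41) := by
    by_contra hno
    push_neg at hno
    obtain ⟨h1, h2, h3, h4⟩ := hno
    have hm1 := (IsLocalRing.mem_maximalIdeal _).mpr h1
    have hm2 := (IsLocalRing.mem_maximalIdeal _).mpr h2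
    have hm3 := (IsLocalRing.mem_maximalIdeal _).mpr h3
    have hm4 := (IsLocalRing.mem_maximalIdeal _).mpr h4
    have heq : (e11 + e31) * (e22 + e42) - (e12 + e32) * (e21 + e41)
        = (e11*e22 - e12*e21) + (e11*e42 - e12*e41) + (e31*e22 - e32*e21)
          + (e31*e42 - e32*e41) := by ring
    have : (e11 + e31) * (e22 + e42) - (e12 + e32) * (e21 + e41) ∈ maximalIdeal R := by
      rw [heq]
      exact add_mem (add_mem (add_mem hm1 hm2) hm3) hm4
    exact (IsLocalRing.mem_maximalIdeal _).mp this hdet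
  -- generic: a unit minor gives a generating pair
  have hspan : ∀ u v eu1 eu2 ev1 ev2 : R, eu1 * p 0 + eu2 * p 1 = u →
      ev1 * p 0 + ev2 * p 1 = v → IsUnit (eu1*ev2 - eu2*ev1) → u ∈ I → v ∈ I →
      I = Ideal.span {u, v} := by
    intro u v eu1 eu2 ev1 ev2 hu hv hΔ huI hvI
    apply le_antisymm
    · rw [hp]
      apply Ideal.span_le.mpr
      rintro t ht
      simp only [Set.mem_insert_iff, Set.mem_singleton_iff] at ht
      rcases ht with rfl | rfl
      · have h1 : (eu1*ev2 - eu2*ev1) * p 0 = ev2 * u + (-eu2) * v := by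
          linear_combination ev2 * hu - eu2 * hv
        rw [aux_eq_inv_mul hΔ h1]
        exact Ideal.mem_span_pair.mpr ⟨↑hΔ.unit⁻¹ * ev2, ↑hΔ.unit⁻¹ * (-eu2), by ring⟩
      · have h1 : (eu1*ev2 - eu2*ev1) * p 1 = (-ev1) * u + eu1 * v := by
          linear_combination eu1 * hv - ev1 * hu
        rw [aux_eq_inv_mul hΔ h1]
        exact Ideal.mem_span_pair.mpr ⟨↑hΔ.unit⁻¹ * (-ev1), ↑hΔ.unit⁻¹ * eu1, by ring⟩
    · apply Ideal.span_le.mpr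
      rintro t ht
      simp only [Set.mem_insert_iff, Set.mem_singleton_iff] at ht
      rcases ht with rfl | rfl
      · exact huI
      · exact hvI
  have hBne : ∀ u v : R, u ∈ A → v ∈ A → I = Ideal.span {u, v} → False := by
    intro u v hu hv hIuv
    apply hB
    rw [← le_bot_iff, ← hABinf]
    refine le_inf ?_ le_rfl
    refine hBI.trans ?_
    rw [hIuv]
    apply Ideal.span_le.mpr
    rintro t ht
    simp only [Set.mem_insert_iff, Set.mem_singleton_iff] at ht
    rcases ht with rfl | rfl
    · exact hu
    · exact hv
  have hAne : ∀ u v : R, u ∈ B → v ∈ B → I = Ideal.span {u, v} → False := by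
    intro u v hu hv hIuv
    apply hA
    rw [← le_bot_iff, ← hABinf]
    refine le_inf le_rfl ?_
    refine hAI.trans ?_
    rw [hIuv]
    apply Ideal.span_le.mpr
    rintro t ht
    simp only [Set.mem_insert_iff, Set.mem_singleton_iff] at ht
    rcases ht with rfl | rfl
    · exact hu
    · exact hv
  rcases hone with h | h | h | h
  · exact absurd (hspan _ _ _ _ _ _ he1 he2 h (hAI ha₀) (hAI ha₁)) (fun hh => hBne _ _ ha₀ ha₁ hh)
  · exact ⟨a₀, b₁, ha₀, hb₁, hspan _ _ _ _ _ _ he1 he4 h (hAI ha₀) (hBI hb₁)⟩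
  · refine ⟨a₁, b₀, ha₁, hb₀, ?_⟩
    rw [Set.pair_comm]
    exact hspan _ _ _ _ _ _ he3 he2 h (hBI hb₀) (hAI ha₁)
  · exact absurd (hspan _ _ _ _ _ _ he3 he4 h (hBI hb₀) (hBI hb₁)) (fun hh => hAne _ _ hb₀ hb₁ hh)

end Exchange

section Assemble
variable {R : Type*} [CommRing R] [IsLocalRing R]
open IsLocalRing Ideal

lemma aux_forward (hCM : IsCohenMacaulayLocalRing R) (hdim : ringKrullDim R = 1)
    {I : Ideal R} (hprim : I.radical = maximalIdeal R) (hmu : I.minGen = 2)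
    (hU : I.IsUlrich) (hD : Module.Decomposable R I) :
    ∃ a b : R, a ∈ maximalIdeal R ∧ b ∈ maximalIdeal R ∧ I = Ideal.span {a, b} ∧
      Ideal.span {a} = Submodule.colon (⊥ : Ideal R) (Ideal.span {b}) ∧
      Ideal.span {b} = Submodule.colon (⊥ : Ideal R) (Ideal.span {a}) := by
  haveI : IsNoetherianRing R := hCM.1
  obtain ⟨_, Q, ⟨n, s, ⟨hn, hrad⟩, hQ⟩, hQle, hQne, hQ2, hfree⟩ := hU
  obtain ⟨N₁, N₂, hN₁, hN₂, hcompl⟩ := hD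
  have hne1 := aux_ne_singleton hmu
  have hIm : I ≤ maximalIdeal R := hprim ▸ Ideal.le_radical
  set A := Submodule.map I.subtype N₁ with hA_def
  set B := Submodule.map I.subtype N₂ with hB_def
  have hinj : Function.Injective I.subtype := Submodule.injective_subtype I
  have hABsup : A ⊔ B = I := by
    rw [hA_def, hB_def, ← Submodule.map_sup, hcompl.sup_eq_top, Submodule.map_top,
      Submodule.range_subtype]
  have hABinf : A ⊓ B = ⊥ := by
    rw [hA_def, hB_def, ← Submodule.map_inf _ hinj, hcompl.inf_eq_bot, Submodule.map_bot]
  have hA : A ≠ ⊥ := by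
    obtain ⟨y, hy, hy0⟩ := Submodule.exists_mem_ne_zero_of_ne_bot hN₁
    intro h
    have hyA : (y : R) ∈ A := ⟨y, hy, rfl⟩
    rw [h, Submodule.mem_bot] at hyA
    exact hy0 (Subtype.ext hyA)
  have hB : B ≠ ⊥ := by
    obtain ⟨y, hy, hy0⟩ := Submodule.exists_mem_ne_zero_of_ne_bot hN₂
    intro h
    have hyB : (y : R) ∈ B := ⟨y, hy, rfl⟩
    rw [h, Submodule.mem_bot] at hyB
    exact hy0 (Subtype.ext hyB)
  have hgen : ∃ p : Fin 2 → R, I = Ideal.span (Set.range p) := by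
    have hfg : I.FG := IsNoetherian.noetherian I
    obtain ⟨n0, s0, hs0⟩ := Submodule.fg_iff_exists_fin_generating_family.mp hfg
    have hnonempty : {n : ℕ | ∃ s : Fin n → R, I = Ideal.span (Set.range s)}.Nonempty :=
      ⟨n0, s0, hs0.symm⟩
    have hmem := Nat.sInf_mem hnonempty
    rw [show sInf {n : ℕ | ∃ s : Fin n → R, I = Ideal.span (Set.range s)} = I.minGen from rfl,
      hmu] at hmem
    exact hmem
  obtain ⟨a, b, haA, hbB, hI⟩ := aux_exchange hABsup hABinf hA hB hgen hne1
  have hAI : A ≤ I := hABsup ▸ le_sup_left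
  have hBI : B ≤ I := hABsup ▸ le_sup_right
  have haI : a ∈ I := hAI haA
  have hbI : b ∈ I := hBI hbB
  have hint : Ideal.span {a} ⊓ Ideal.span {b} = ⊥ := by
    rw [eq_bot_iff, ← hABinf]
    exact inf_le_inf ((Ideal.span_singleton_le_iff_mem _).mpr haA)
      ((Ideal.span_singleton_le_iff_mem _).mpr hbB)
  have ha0 : a ≠ 0 := by
    intro h
    apply hne1 b
    apply le_antisymm
    · rw [hI]
      apply Ideal.span_le.mpr
      rintro t ht
      simp only [Set.mem_insert_iff, Set.mem_singleton_iff] at ht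
      rcases ht with rfl | rfl
      · rw [h]; exact zero_mem _
      · exact Ideal.mem_span_singleton_self _
    · exact (Ideal.span_singleton_le_iff_mem _).mpr hbI
  have hb0 : b ≠ 0 := by
    intro h
    apply hne1 a
    apply le_antisymm
    · rw [hI]
      apply Ideal.span_le.mpr
      rintro t ht
      simp only [Set.mem_insert_iff, Set.mem_singleton_iff] at ht
      rcases ht with rfl | rfl
      · exact Ideal.mem_span_singleton_self _
      · rw [h]; exact zero_mem _
    · exact (Ideal.span_singleton_le_iff_mem _).mpr haI
  have hP := aux_P_of_free haI hbI hI hIm hfree hne1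
  -- the parameter ideal is principal
  rw [hdim] at hn
  have hn1 : n = 1 := by exact_mod_cast hn
  subst hn1
  rw [Set.range_unique] at hQ hrad
  set x := s default with hxdef
  have hnzd := aux_nzd_of_param hCM hdim hrad
  have hxI : x ∈ I := hQle (hQ ▸ Ideal.mem_span_singleton_self x)
  obtain ⟨α, β, hx⟩ := Ideal.mem_span_pair.mp (show x ∈ Ideal.span {a, b} from hI ▸ hxI)
  have hI2 : I ^ 2 = Ideal.span {x} * I := by rw [hQ2, hQ]
  have hunit : IsUnit α ∨ IsUnit β := by
    by_contra h
    push_neg at h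
    obtain ⟨h1, h2⟩ := h
    have hαm : α ∈ maximalIdeal R := (IsLocalRing.mem_maximalIdeal α).mpr h1
    have hβm : β ∈ maximalIdeal R := (IsLocalRing.mem_maximalIdeal β).mpr h2
    have hxmI : x ∈ maximalIdeal R * I := by
      rw [← hx]
      exact add_mem (Ideal.mul_mem_mul hαm haI) (Ideal.mul_mem_mul hβm hbI)
    have hle : (I ^ 2 : Ideal R) ≤ (maximalIdeal R) • (I ^ 2) := by
      rw [Ideal.smul_eq_mul]
      calc I ^ 2 = Ideal.span {x} * I := hI2
        _ ≤ (maximalIdeal R * I) * I :=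
            Ideal.mul_mono ((Ideal.span_singleton_le_iff_mem _).mpr hxmI) le_rfl
        _ = maximalIdeal R * I ^ 2 := by rw [mul_assoc, ← pow_two]
    have hbot : (I ^ 2 : Ideal R) = ⊥ :=
      Submodule.eq_bot_of_le_smul_of_le_jacobson_bot (maximalIdeal R) _
        (IsNoetherian.noetherian _) hle (IsLocalRing.maximalIdeal_le_jacobson ⊥)
    have hx2 : x * x = 0 := by
      have hmem : x * x ∈ I ^ 2 := by rw [pow_two]; exact Ideal.mul_mem_mul hxI hxI
      rw [hbot] at hmem
      exact (Submodule.mem_bot R).mp hmem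
    have hx0 : x = 0 := hnzd x hx2
    exact one_ne_zero (hnzd 1 (by rw [hx0, mul_zero]))
  rcases hunit with hα | hβ
  · exact aux_final hIm haI hbI hI hint hP hx hnzd hI2 hα hb0
  · refine aux_final (a := b) (b := a) (α := β) (β := α) hIm hbI haI ?_ ?_ ?_ ?_ hnzd hI2 hβ ha0
    · rw [hI, Set.pair_comm]
    · rw [inf_comm]; exact hint
    · intro r1 s1 h1
      exact (hP s1 r1 (by rwa [add_comm] at h1)).symm
    · linear_combination hx

end Assemble


open IsLocalRing in
/-- In a one-dimensional Cohen–Macaulay local ring `(R, m)`, an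
`m`-primary ideal `I` with `μ_R(I) = 2` is a decomposable Ulrich ideal iff
`I = (a, b)` with `(a) = (0) :_R b` and `(b) = (0) :_R a` for some `a, b ∈ m`. -/
theorem decomposable_ulrich_two_generated_iff
    {R : Type*} [CommRing R] [IsLocalRing R]
    (hCM : IsCohenMacaulayLocalRing R) (hdim : ringKrullDim R = 1)
    (I : Ideal R) (hprim : I.radical = maximalIdeal R) (hmu : I.minGen = 2) :
    (I.IsUlrich ∧ Module.Decomposable R I) ↔
      ∃ a b : R, a ∈ maximalIdeal R ∧ b ∈ maximalIdeal R ∧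
        I = Ideal.span {a, b} ∧
        Ideal.span {a} = Submodule.colon (⊥ : Ideal R) (Ideal.span {b}) ∧
        Ideal.span {b} = Submodule.colon (⊥ : Ideal R) (Ideal.span {a}) := by
  constructor
  · rintro ⟨hU, hD⟩
    exact aux_forward hCM hdim hprim hmu hU hD
  · rintro ⟨a, b, ham, hbm, hI, h1, h2⟩
    exact aux_backward hCM hdim hprim hmu ham hbm hI h1 h2
end

section
/- Let k be a field, S = k[[X, Y]] the formal power series ring, m₀ ≥ 2, and R = S/(Y^{2m₀}). Then the set of Ulrich ideals I of R with y^{m₀} ∈ I equals { (x^ℓ + αy, y^{m₀}) : ℓ > 0, α ∈ R }. Moreover, if ℓ, ℓ′ > 0 and α, α′ ∈ R satisfy (x^ℓ + αy, y^{m₀}) = (x^{ℓ′} + α′y, y^{m₀}), then ℓ = ℓ′ and α ≡ α′ mod m, where m is the maximal ideal of R. -/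
open MvPowerSeries Ideal IsLocalRing
open scoped PowerSeries nonZeroDivisors

namespace Ideal

variable {R : Type*} [CommRing R]

theorem free_cotangent_of_span_range {ι : Type*} [Fintype ι] {v : ι → R}
    (h : ∀ c : ι → R, ∑ i, c i * v i ∈ span (Set.range v) ^ 2 → ∀ i, c i ∈ span (Set.range v)) :
    Module.Free (R ⧸ span (Set.range v)) (span (Set.range v)).Cotangent := by
  set I := span (Set.range v)
  let u : ι → I := fun i => ⟨v i, subset_span ⟨i, rfl⟩⟩
  have hu : ∀ c : ι → R, ∑ i, Ideal.Quotient.mk I (c i) • I.toCotangent (u i) =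
      I.toCotangent (∑ i, c i • u i) := by
    intro c
    simp only [map_sum, map_smul]
    rfl
  have hspan : ⊤ ≤ Submodule.span (R ⧸ I) (Set.range (I.toCotangent ∘ u)) := by
    rintro m -
    obtain ⟨z, rfl⟩ := I.toCotangent_surjective m
    obtain ⟨c, hc⟩ := (Submodule.mem_span_range_iff_exists_fun R).mp z.2
    rw [show z = ∑ i, c i • u i from Subtype.ext (by simpa [u] using hc.symm), ← hu]
    exact Submodule.sum_mem _ fun i _ => Submodule.smul_mem _ _ (Submodule.subset_span ⟨i, rfl⟩)
  have hli : LinearIndependent (R ⧸ I) (I.toCotangent ∘ u) := by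
    rw [Fintype.linearIndependent_iff]
    intro g hg
    choose c hc using fun i => Ideal.Quotient.mk_surjective (g i)
    obtain rfl : g = fun i => Ideal.Quotient.mk I (c i) := funext fun i => (hc i).symm
    rw [Function.comp_def, hu, toCotangent_eq_zero] at hg
    exact fun i => Ideal.Quotient.eq_zero_iff_mem.mpr (h c (by simpa [u] using hg) i)
  exact Module.Free.of_basis (Module.Basis.mk hli hspan)

variable {a b : R}

theorem span_pair_sq_of_mul_self_eq_zero (hb : b * b = 0) :
    span {a, b} ^ 2 = span {a} * span {a, b} := by
  rw [sq, span_insert, sup_mul, mul_sup, mul_sup, span_singleton_mul_span_singleton b b, hb,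
    span_singleton_eq_bot.mpr rfl, sup_bot_eq, mul_comm (span {b}), sup_assoc, sup_idem]

theorem eq_span_pair_of_sq_eq_span_singleton_mul {I : Ideal R} (ha : a ∈ I) (hb : b ∈ I)
    (hsq : I ^ 2 = span {a} * I) (hcolon : ∀ g, b * g ∈ span {a} → g ∈ span {a, b}) :
    I = span {a, b} := by
  refine le_antisymm (fun g hg => hcolon g (mul_le_left (I := span {a}) (J := I) ?_))
    (span_le.mpr ?_)
  · exact hsq ▸ sq I ▸ mul_mem_mul hb hg
  · rintro _ (rfl | rfl) <;> assumption

theorem free_cotangent_span_pair (ha : a ∈ R⁰) (hb : b * b = 0)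
    (hcolon : ∀ g, b * g ∈ span {a} → g ∈ span {a, b}) :
    Module.Free (R ⧸ span {a, b}) (span {a, b}).Cotangent := by
  rw [← Matrix.range_cons_cons_empty a b ![]]
  refine free_cotangent_of_span_range fun c hc => ?_
  rw [Matrix.range_cons_cons_empty, Fin.sum_univ_two, span_pair_sq_of_mul_self_eq_zero hb,
    mem_span_singleton_mul] at hc
  obtain ⟨z, hz, hcz⟩ := hc
  simp only [Matrix.cons_val_zero, Matrix.cons_val_one] at hcz
  have hc₁ : c 1 ∈ span {a, b} :=
    hcolon _ (mem_span_singleton'.mpr ⟨z - c 0, by linear_combination hcz⟩)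
  obtain ⟨s, t, hst⟩ := mem_span_pair.mp hc₁
  have hc₀ : c 0 = z - s * b := by
    rw [← sub_eq_zero, ← mul_left_mem_nonZeroDivisors_eq_zero_iff ha]
    linear_combination -hcz + b * hst - t * hb
  rw [Matrix.range_cons_cons_empty]
  intro i
  fin_cases i
  · simpa [hc₀] using sub_mem hz (mul_mem_left _ s (subset_span (by simp)))
  · exact hc₁

end Ideal

namespace MvPowerSeries

variable {σ τ A : Type*} [CommRing A]

instance [IsDomain A] : IsDomain (MvPowerSeries σ A) := NoZeroDivisors.to_isDomain _

theorem X_dvd_iff_killCompl_eq_zero {e : σ ↪ τ} {t : τ} (he : Set.range e = {t}ᶜ)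
    {φ : MvPowerSeries τ A} : X t ∣ φ ↔ killCompl e φ = 0 := by
  refine ⟨fun ⟨ψ, hψ⟩ => ?_, fun h => X_dvd_iff.mpr fun m hm => ?_⟩
  · rw [hψ, map_mul, killCompl_X_eq_zero (by simp [he]), zero_mul]
  · have hsupp : ↑m.support ⊆ Set.range e := by
      intro i hi
      rw [he]
      rintro rfl
      exact (Finsupp.mem_support_iff.mp hi) hm
    rw [← Finsupp.embDomain_comapDomain hsupp, ← coeff_killCompl, h, map_zero]

theorem constantCoeff_killCompl (e : σ ↪ τ) (φ : MvPowerSeries τ A) :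
    constantCoeff (killCompl e φ) = constantCoeff φ := by
  rw [← coeff_zero_eq_constantCoeff_apply, coeff_killCompl, Finsupp.embDomain_zero,
    coeff_zero_eq_constantCoeff_apply]

def embX₀ : Unit ↪ Fin 2 := ⟨fun _ => 0, fun _ _ _ => rfl⟩

theorem range_embX₀ : Set.range embX₀ = {1}ᶜ := by
  ext i
  fin_cases i
  · exact iff_of_true ⟨(), rfl⟩ (by simp)
  · exact iff_of_false (fun ⟨_, h⟩ => Fin.zero_ne_one h) (by simp)

noncomputable abbrev killX₁ : MvPowerSeries (Fin 2) A →ₐ[A] A⟦X⟧ := killCompl embX₀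

noncomputable abbrev renameX₀ : A⟦X⟧ →ₐ[A] MvPowerSeries (Fin 2) A := rename embX₀

theorem killX₁_X_zero : killX₁ (X 0 : MvPowerSeries (Fin 2) A) = PowerSeries.X :=
  killCompl_X (e := embX₀) ()

theorem killX₁_X_one : killX₁ (X 1 : MvPowerSeries (Fin 2) A) = 0 :=
  killCompl_X_eq_zero (by simp [range_embX₀])

theorem renameX₀_X : renameX₀ (PowerSeries.X : A⟦X⟧) = X 0 :=
  rename_X embX₀ ()

theorem X_one_dvd_iff {φ : MvPowerSeries (Fin 2) A} : X 1 ∣ φ ↔ killX₁ φ = 0 :=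
  X_dvd_iff_killCompl_eq_zero range_embX₀

theorem ker_killX₁ : RingHom.ker (killX₁ (A := A)) = span {X 1} := by
  ext φ
  rw [RingHom.mem_ker, mem_span_singleton, X_one_dvd_iff]

theorem exists_eq_renameX₀_killX₁_add (φ : MvPowerSeries (Fin 2) A) :
    ∃ ψ, φ = renameX₀ (killX₁ φ) + X 1 * ψ := by
  obtain ⟨ψ, hψ⟩ := X_one_dvd_iff.mpr (show killX₁ (φ - renameX₀ (killX₁ φ)) = 0 by simp)
  exact ⟨ψ, by rw [← hψ]; ring⟩

theorem ker_constantCoeff_eq_span :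
    RingHom.ker (constantCoeff (σ := Fin 2) (R := A)) = span {X 0, X 1} := by
  refine le_antisymm (fun φ hφ => ?_) ?_
  · obtain ⟨ψ, hψ⟩ := exists_eq_renameX₀_killX₁_add φ
    obtain ⟨χ, hχ⟩ : PowerSeries.X ∣ killX₁ φ := by
      rw [PowerSeries.X_dvd_iff]
      exact (constantCoeff_killCompl embX₀ φ).trans hφ
    rw [hχ, map_mul, renameX₀_X] at hψ
    exact mem_span_pair.mpr ⟨renameX₀ χ, ψ, by rw [hψ]; ring⟩
  · rw [span_le]
    rintro _ (rfl | rfl) <;> simp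

variable {k : Type*} [Field k]

theorem prime_X_one : Prime (X 1 : MvPowerSeries (Fin 2) k) := by
  rw [← span_singleton_prime (nonZeroDivisors.ne_zero X_mem_nonzeroDivisors), ← ker_killX₁]
  exact RingHom.ker_isPrime _

theorem not_X_one_dvd_X_zero_pow_add (ℓ : ℕ) (E : MvPowerSeries (Fin 2) k) :
    ¬ X 1 ∣ X 0 ^ ℓ + X 1 * E := by
  simp [X_one_dvd_iff, killX₁_X_zero, killX₁_X_one, PowerSeries.X_ne_zero]

/-- `φ(X, 0) = Xʲ u` in the DVR `k⟦X⟧`, and `φ - Xʲ u` is divisible by `Y`. -/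
theorem exists_eq_unit_mul_X_zero_pow_add {φ : MvPowerSeries (Fin 2) k} (hφ : killX₁ φ ≠ 0) :
    ∃ (j : ℕ) (U E : MvPowerSeries (Fin 2) k), IsUnit U ∧ φ = U * (X 0 ^ j + X 1 * E) := by
  obtain ⟨j, u, hu⟩ :=
    IsDiscreteValuationRing.eq_unit_mul_pow_irreducible hφ PowerSeries.X_irreducible
  obtain ⟨ψ, hψ⟩ := exists_eq_renameX₀_killX₁_add φ
  have hU : IsUnit (renameX₀ (u : k⟦X⟧)) := u.isUnit.map _
  refine ⟨j, _, ↑hU.unit⁻¹ * ψ, hU, ?_⟩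
  rw [hu, map_mul, map_pow, renameX₀_X] at hψ
  linear_combination hψ - X 1 * ψ * hU.mul_val_inv

theorem ringKrullDim_quotient_X_one_pow {n : ℕ} (hn : n ≠ 0) :
    ringKrullDim (MvPowerSeries (Fin 2) k ⧸ span {(X 1 : MvPowerSeries (Fin 2) k) ^ n}) = 1 := by
  let e : MvPowerSeries (Fin 2) k ⧸ span {(X 1 : MvPowerSeries (Fin 2) k)} ≃+* k⟦X⟧ :=
    (quotEquivOfEq ker_killX₁.symm).trans
      (RingHom.quotientKerEquivOfSurjective
        (f := (killX₁ (A := k) : MvPowerSeries (Fin 2) k →+* k⟦X⟧))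
        fun p => ⟨renameX₀ p, killCompl_rename_app p⟩)
  -- `(Yⁿ)` and `(Y)` lie in the same prime ideals.
  rw [ringKrullDim_quotient, PrimeSpectrum.zeroLocus_span,
    PrimeSpectrum.zeroLocus_singleton_pow _ _ (Nat.pos_of_ne_zero hn),
    ← PrimeSpectrum.zeroLocus_span, ← ringKrullDim_quotient, ringKrullDim_eq_of_ringEquiv e,
    IsDiscreteValuationRing.ringKrullDim_eq_one]

theorem maximalIdeal_quotient_eq_span {J : Ideal (MvPowerSeries (Fin 2) k)}
    (hJ : J ≤ RingHom.ker constantCoeff) [IsLocalRing (MvPowerSeries (Fin 2) k ⧸ J)] :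
    maximalIdeal (MvPowerSeries (Fin 2) k ⧸ J) =
      span {Ideal.Quotient.mk J (X 0), Ideal.Quotient.mk J (X 1)} := by
  have : (RingHom.ker (constantCoeff (σ := Fin 2) (R := k))).IsMaximal :=
    RingHom.ker_isMaximal_of_surjective _ fun c => ⟨C c, by simp⟩
  rw [← eq_maximalIdeal (IsMaximal.map_of_surjective_of_ker_le (m := RingHom.ker constantCoeff)
    Ideal.Quotient.mk_surjective (by rwa [mk_ker])), ker_constantCoeff_eq_span, map_span,
    Set.image_pair]

end MvPowerSeries

namespace QuotientXOnePow

section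

variable {k : Type*} [Field k] {n : ℕ}

local notation "S" => MvPowerSeries (Fin 2) k
local notation "R" => MvPowerSeries (Fin 2) k ⧸ span {(X 1 : MvPowerSeries (Fin 2) k) ^ n}
local notation "π" => Ideal.Quotient.mk (span {(X 1 : MvPowerSeries (Fin 2) k) ^ n})

theorem mk_X_one_pow_self : π (X 1) ^ n = 0 := by
  rw [← map_pow, Ideal.Quotient.eq_zero_iff_mem]
  exact mem_span_singleton_self _

theorem mk_X_zero_pow_add (ℓ : ℕ) (E : S) :
    π (X 0 ^ ℓ + X 1 * E) = π (X 0) ^ ℓ + π E * π (X 1) := by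
  rw [map_add, map_mul, map_pow, mul_comm]

noncomputable def killY (hn : n ≠ 0) : R →+* k⟦X⟧ :=
  Ideal.Quotient.lift _ (killX₁ : S →ₐ[k] k⟦X⟧) fun a ha => by
    obtain ⟨c, rfl⟩ := mem_span_singleton'.mp ha
    simp [killX₁_X_one, zero_pow hn]

theorem killY_mk (hn : n ≠ 0) (φ : S) : killY hn (π φ) = killX₁ φ := rfl

theorem killY_X_one (hn : n ≠ 0) : killY hn (π (X 1)) = 0 := killX₁_X_one

theorem killY_X_zero_pow_add (hn : n ≠ 0) (ℓ : ℕ) (α : R) :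
    killY hn (π (X 0) ^ ℓ + α * π (X 1)) = PowerSeries.X ^ ℓ := by
  simp [killY_mk, killX₁_X_zero, killX₁_X_one]

theorem X_zero_pow_add_mem_nonZeroDivisors (ℓ : ℕ) (α : R) :
    π (X 0) ^ ℓ + α * π (X 1) ∈ R⁰ := by
  obtain ⟨E, rfl⟩ := Ideal.Quotient.mk_surjective α
  rw [← mk_X_zero_pow_add, mem_nonZeroDivisors_iff_right]
  intro h hh
  obtain ⟨H, rfl⟩ := Ideal.Quotient.mk_surjective h
  rw [← map_mul, Ideal.Quotient.eq_zero_iff_mem, mem_span_singleton, mul_comm] at hh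
  rw [Ideal.Quotient.eq_zero_iff_mem, mem_span_singleton]
  exact prime_X_one.pow_dvd_of_dvd_mul_left n (not_X_one_dvd_X_zero_pow_add ℓ E) hh

theorem mem_span_X_zero_pow_add_of_X_one_pow_mul_mem {p q : ℕ} (hpq : p + q = n) (ℓ : ℕ)
    (α g : R) (h : π (X 1) ^ p * g ∈ span {π (X 0) ^ ℓ + α * π (X 1)}) :
    g ∈ span {π (X 0) ^ ℓ + α * π (X 1), π (X 1) ^ q} := by
  obtain ⟨E, rfl⟩ := Ideal.Quotient.mk_surjective α
  obtain ⟨G, rfl⟩ := Ideal.Quotient.mk_surjective g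
  obtain ⟨h, hh⟩ := mem_span_singleton'.mp h
  obtain ⟨H, rfl⟩ := Ideal.Quotient.mk_surjective h
  rw [← mk_X_zero_pow_add, ← map_mul, ← map_pow, ← map_mul, Ideal.Quotient.eq,
    mem_span_singleton', ← hpq] at hh
  obtain ⟨C, hC⟩ := hh
  obtain ⟨H', rfl⟩ : X 1 ^ p ∣ H :=
    prime_X_one.pow_dvd_of_dvd_mul_left p (not_X_one_dvd_X_zero_pow_add ℓ E)
      ⟨G + C * X 1 ^ q, by linear_combination -hC⟩
  have hG : G = H' * (X 0 ^ ℓ + X 1 * E) - C * X 1 ^ q :=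
    mul_left_cancel₀ (pow_ne_zero p prime_X_one.ne_zero) (by linear_combination hC)
  rw [← mk_X_zero_pow_add, hG, map_sub, map_mul, map_mul, map_pow]
  exact sub_mem (mul_mem_left _ _ (subset_span (by simp)))
    (mul_mem_left _ _ (subset_span (by simp)))

theorem le_of_X_zero_pow_add_mem_span (hn : n ≠ 0) {ℓ ℓ' p : ℕ} (hp : p ≠ 0) (α α' : R)
    (h : π (X 0) ^ ℓ + α * π (X 1) ∈ span {π (X 0) ^ ℓ' + α' * π (X 1), π (X 1) ^ p}) :
    ℓ' ≤ ℓ := by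
  obtain ⟨u, v, huv⟩ := mem_span_pair.mp h
  have := congrArg (killY hn) huv
  rw [map_add, map_mul, map_mul, killY_X_zero_pow_add, killY_X_zero_pow_add, map_pow,
    killY_X_one, zero_pow hp, mul_zero, add_zero] at this
  exact (pow_dvd_pow_iff PowerSeries.X_ne_zero PowerSeries.X_prime.not_isUnit).mp
    (Dvd.intro_left _ this)

theorem X_one_not_mem_span_X_zero_pow_add (hn : 2 ≤ n) {ℓ p : ℕ} (hℓ : 0 < ℓ) (hp : 2 ≤ p)
    (α : R) : π (X 1) ∉ span {π (X 0) ^ ℓ + α * π (X 1), π (X 1) ^ p} := by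
  intro h
  obtain ⟨E, rfl⟩ := Ideal.Quotient.mk_surjective α
  obtain ⟨u, v, huv⟩ := mem_span_pair.mp h
  obtain ⟨F, rfl⟩ := Ideal.Quotient.mk_surjective u
  obtain ⟨V, rfl⟩ := Ideal.Quotient.mk_surjective v
  obtain ⟨F', rfl⟩ : X 1 ∣ F := by
    have := congrArg (killY (by omega)) huv
    rw [map_add, map_mul, map_mul, killY_X_zero_pow_add, map_pow, killY_X_one,
      zero_pow (by omega), mul_zero, add_zero, killY_mk] at this
    exact X_one_dvd_iff.mpr
      ((mul_eq_zero.mp this).resolve_right (pow_ne_zero _ PowerSeries.X_ne_zero))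
  rw [← mk_X_zero_pow_add, ← map_pow, ← map_mul, ← map_mul, ← map_add, Ideal.Quotient.eq,
    mem_span_singleton'] at huv
  obtain ⟨C, hC⟩ := huv
  obtain ⟨p, rfl⟩ := Nat.exists_eq_add_of_le' hp
  obtain ⟨n, rfl⟩ := Nat.exists_eq_add_of_le' hn
  have h1 : F' * (X 0 ^ ℓ + X 1 * E) + V * X 1 ^ (p + 1) - C * X 1 ^ (n + 1) = 1 :=
    mul_left_cancel₀ prime_X_one.ne_zero (by linear_combination -hC)
  simpa [zero_pow hℓ.ne'] using congrArg constantCoeff h1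

theorem maximalIdeal_eq_span (hn : n ≠ 0) [IsLocalRing R] :
    maximalIdeal R = span {π (X 0), π (X 1)} :=
  maximalIdeal_quotient_eq_span <| span_le.mpr <| by simp [zero_pow hn]

theorem span_X_zero_pow_add_le_maximalIdeal (hn : n ≠ 0) [IsLocalRing R] {ℓ p : ℕ} (hℓ : 0 < ℓ)
    (hp : 0 < p) (α : R) :
    span {π (X 0) ^ ℓ + α * π (X 1), π (X 1) ^ p} ≤ maximalIdeal R := by
  have hx : π (X 0) ∈ maximalIdeal R := maximalIdeal_eq_span (k := k) hn ▸ subset_span (by simp)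
  have hy : π (X 1) ∈ maximalIdeal R := maximalIdeal_eq_span (k := k) hn ▸ subset_span (by simp)
  rw [span_le]
  rintro _ (rfl | rfl)
  · exact add_mem (pow_mem_of_mem _ hx ℓ hℓ) (mul_mem_left _ α hy)
  · exact pow_mem_of_mem _ hy p hp

theorem radical_eq_maximalIdeal_of_X_zero_pow_add_mem (hn : n ≠ 0) [IsLocalRing R] {ℓ : ℕ}
    (α : R) {J : Ideal R} (ha : π (X 0) ^ ℓ + α * π (X 1) ∈ J) (hJ : J ≤ maximalIdeal R) :
    J.radical = maximalIdeal R := by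
  have hy : π (X 1) ∈ J.radical := ⟨n, (mk_X_one_pow_self (k := k)).symm ▸ J.zero_mem⟩
  have hx : π (X 0) ∈ J.radical := by
    refine mem_radical_of_pow_mem (m := ℓ) ?_
    rw [← add_sub_cancel_right (π (X 0) ^ ℓ) (α * π (X 1))]
    exact sub_mem (le_radical ha) (mul_mem_left _ α hy)
  refine le_antisymm ((radical_mono hJ).trans_eq (maximalIdeal.isMaximal R).isPrime.radical) ?_
  rw [maximalIdeal_eq_span hn, span_le]
  rintro _ (rfl | rfl) <;> assumption

theorem exists_span_singleton_eq_span_X_zero_pow_add (hn : n ≠ 0) [IsLocalRing R] {q : R}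
    (hq : (span {q}).radical = maximalIdeal R) :
    ∃ ℓ α, 0 < ℓ ∧ span {q} = span {π (X 0) ^ ℓ + α * π (X 1)} := by
  obtain ⟨Q, rfl⟩ := Ideal.Quotient.mk_surjective q
  obtain ⟨N, hN⟩ : π (X 0) ∈ (span {π Q}).radical :=
    hq ▸ maximalIdeal_eq_span (k := k) hn ▸ subset_span (by simp)
  obtain ⟨f, hf⟩ := mem_span_singleton'.mp hN
  have hQ : killX₁ Q ≠ 0 := by
    intro h0
    have := congrArg (killY hn) hf
    rw [map_mul, killY_mk, h0, mul_zero, map_pow, killY_mk, killX₁_X_zero] at this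
    exact pow_ne_zero N PowerSeries.X_ne_zero this.symm
  obtain ⟨ℓ, U, E, hU, rfl⟩ := exists_eq_unit_mul_X_zero_pow_add hQ
  have hspan : span {π (U * (X 0 ^ ℓ + X 1 * E))} = span {π (X 0) ^ ℓ + π E * π (X 1)} := by
    rw [map_mul, span_singleton_mul_left_unit (hU.map _), mk_X_zero_pow_add]
  refine ⟨ℓ, π E, Nat.pos_of_ne_zero fun hℓ => ?_, hspan⟩
  have hunit : IsUnit (π (X 0) ^ ℓ + π E * π (X 1)) := by
    rw [hℓ, pow_zero]
    exact IsNilpotent.isUnit_one_add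
      ((Commute.all _ _).isNilpotent_mul_left ⟨n, mk_X_one_pow_self⟩)
  rw [hspan, span_singleton_eq_top.mpr hunit, radical_top] at hq
  exact (maximalIdeal.isMaximal R).ne_top hq.symm

end

section

variable {k : Type*} [Field k] {m : ℕ}

local notation "R" => MvPowerSeries (Fin 2) k ⧸ span {(X 1 : MvPowerSeries (Fin 2) k) ^ (2 * m)}
local notation "π" => Ideal.Quotient.mk (span {(X 1 : MvPowerSeries (Fin 2) k) ^ (2 * m)})

theorem isUlrich_span_X_zero_pow_add (hm : m ≠ 0) [IsLocalRing R] {ℓ : ℕ} (hℓ : 0 < ℓ) (α : R) :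
    (span {π (X 0) ^ ℓ + α * π (X 1), π (X 1) ^ m}).IsUlrich := by
  have hn : 2 * m ≠ 0 := by omega
  have hle := span_X_zero_pow_add_le_maximalIdeal hn hℓ (Nat.pos_of_ne_zero hm) α
  have hcolon := mem_span_X_zero_pow_add_of_X_one_pow_mul_mem (two_mul m).symm ℓ α
  have hsq : π (X 1) ^ m * π (X 1) ^ m = 0 := by rw [← pow_add, ← two_mul, mk_X_one_pow_self]
  refine ⟨radical_eq_maximalIdeal_of_X_zero_pow_add_mem hn (ℓ := ℓ) α (subset_span (by simp)) hle,
    span {π (X 0) ^ ℓ + α * π (X 1)},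
    ⟨1, ![π (X 0) ^ ℓ + α * π (X 1)], ⟨?_, ?_⟩, by rw [Matrix.range_cons_empty]⟩,
    span_mono (by simp), fun h => ?_, span_pair_sq_of_mul_self_eq_zero hsq,
    free_cotangent_span_pair (X_zero_pow_add_mem_nonZeroDivisors ℓ α) hsq hcolon⟩
  · rw [ringKrullDim_quotient_X_one_pow hn, Nat.cast_one]
  · rw [Matrix.range_cons_empty]
    exact radical_eq_maximalIdeal_of_X_zero_pow_add_mem hn α (mem_span_singleton_self _)
      ((span_mono (by simp)).trans hle)
  · have h₁ := hcolon 1 (by rw [mul_one, ← h]; exact subset_span (by simp))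
    exact (maximalIdeal.isMaximal R).ne_top (eq_top_of_isUnit_mem _ (hle h₁) isUnit_one)

theorem exists_eq_span_X_zero_pow_add_of_isUlrich (hm : m ≠ 0) [IsLocalRing R] {I : Ideal R}
    (hI : I.IsUlrich) (hy : π (X 1) ^ m ∈ I) :
    ∃ ℓ α, 0 < ℓ ∧ I = span {π (X 0) ^ ℓ + α * π (X 1), π (X 1) ^ m} := by
  obtain ⟨-, Q, ⟨d, s, ⟨hdim, hrad⟩, rfl⟩, hQI, -, hsq, -⟩ := hI
  rw [ringKrullDim_quotient_X_one_pow (by omega)] at hdim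
  obtain rfl : d = 1 := by exact_mod_cast hdim
  rw [Set.range_unique] at hrad hQI hsq
  obtain ⟨ℓ, α, hℓ, hspan⟩ := exists_span_singleton_eq_span_X_zero_pow_add (by omega) hrad
  rw [hspan] at hQI hsq
  exact ⟨ℓ, α, hℓ, eq_span_pair_of_sq_eq_span_singleton_mul (hQI (mem_span_singleton_self _)) hy
    hsq (mem_span_X_zero_pow_add_of_X_one_pow_mul_mem (two_mul m).symm ℓ α)⟩

theorem span_X_zero_pow_add_inj (hm : 2 ≤ m) [IsLocalRing R] {ℓ ℓ' : ℕ} (hℓ : 0 < ℓ)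
    {α α' : R} (h : span {π (X 0) ^ ℓ + α * π (X 1), π (X 1) ^ m} =
      span {π (X 0) ^ ℓ' + α' * π (X 1), π (X 1) ^ m}) :
    ℓ = ℓ' ∧ α - α' ∈ maximalIdeal R := by
  have hn : 2 * m ≠ 0 := by omega
  have h₁ : π (X 0) ^ ℓ + α * π (X 1) ∈ span {π (X 0) ^ ℓ' + α' * π (X 1), π (X 1) ^ m} :=
    h ▸ subset_span (by simp)
  have h₂ : π (X 0) ^ ℓ' + α' * π (X 1) ∈ span {π (X 0) ^ ℓ + α * π (X 1), π (X 1) ^ m} :=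
    h ▸ subset_span (by simp)
  obtain rfl : ℓ = ℓ' := le_antisymm (le_of_X_zero_pow_add_mem_span hn (by omega) α' α h₂)
    (le_of_X_zero_pow_add_mem_span hn (by omega) α α' h₁)
  refine ⟨rfl, ?_⟩
  by_contra hα
  rw [mem_maximalIdeal, mem_nonunits_iff, not_not] at hα
  have hdiff : (α - α') * π (X 1) ∈ span {π (X 0) ^ ℓ + α' * π (X 1), π (X 1) ^ m} := by
    rw [show (α - α') * π (X 1) = π (X 0) ^ ℓ + α * π (X 1) - (π (X 0) ^ ℓ + α' * π (X 1)) by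
      ring]
    exact sub_mem h₁ (subset_span (by simp))
  apply X_one_not_mem_span_X_zero_pow_add (by omega) hℓ hm α'
  simpa [← mul_assoc] using mul_mem_left _ (↑hα.unit⁻¹) hdiff

end

end QuotientXOnePow

open IsLocalRing in
/-- For `R = k[[X, Y]]/(Y^{2m₀})`, `m₀ ≥ 2`: the Ulrich ideals
`I` of `R` with `y^{m₀} ∈ I` are exactly the ideals `(x^ℓ + αy, y^{m₀})` with
`ℓ > 0`, `α ∈ R`; moreover two such ideals coincide only if the `ℓ`'s agree and
the `α`'s are congruent modulo the maximal ideal of `R`. -/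
theorem ulrich_ideals_Y_even
    (k : Type*) [Field k] (m₀ : ℕ) (hm : 2 ≤ m₀)
    (X Y : MvPowerSeries (Fin 2) k)
    (hX : X = MvPowerSeries.X 0) (hY : Y = MvPowerSeries.X 1)
    (f : MvPowerSeries (Fin 2) k) (hf : f = Y ^ (2 * m₀))
    [IsLocalRing (MvPowerSeries (Fin 2) k ⧸ Ideal.span {f})]
    (x y : MvPowerSeries (Fin 2) k ⧸ Ideal.span {f})
    (hx : x = Ideal.Quotient.mk (Ideal.span {f}) X)
    (hy : y = Ideal.Quotient.mk (Ideal.span {f}) Y) :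
    ({I : Ideal (MvPowerSeries (Fin 2) k ⧸ Ideal.span {f}) |
        I.IsUlrich ∧ y ^ m₀ ∈ I} =
      {I : Ideal (MvPowerSeries (Fin 2) k ⧸ Ideal.span {f}) |
        ∃ (ℓ : ℕ) (α : MvPowerSeries (Fin 2) k ⧸ Ideal.span {f}), 0 < ℓ ∧
          I = Ideal.span {x ^ ℓ + α * y, y ^ m₀}}) ∧
    (∀ (ℓ ℓ' : ℕ), 0 < ℓ → 0 < ℓ' →
      ∀ α α' : MvPowerSeries (Fin 2) k ⧸ Ideal.span {f},
        Ideal.span {x ^ ℓ + α * y, y ^ m₀} = Ideal.span {x ^ ℓ' + α' * y, y ^ m₀} →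
        ℓ = ℓ' ∧ α - α' ∈ maximalIdeal (MvPowerSeries (Fin 2) k ⧸ Ideal.span {f})) := by
  subst hX hY hf hx hy
  refine ⟨Set.ext fun I => ⟨fun ⟨hI, hyI⟩ => ?_, ?_⟩,
    fun ℓ ℓ' hℓ _ α α' h => QuotientXOnePow.span_X_zero_pow_add_inj hm hℓ h⟩
  · exact QuotientXOnePow.exists_eq_span_X_zero_pow_add_of_isUlrich (by omega) hI hyI
  · rintro ⟨ℓ, α, hℓ, rfl⟩
    exact ⟨QuotientXOnePow.isUlrich_span_X_zero_pow_add (by omega) hℓ α, subset_span (by simp)⟩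
end
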